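/- Let $G(x) = \sum_{i \ge 1} a_i x^i$ be a power series over a $\mathbb{Q}$-algebra $K$ and let $\partial$ be the partial derivative for the multiplicative formal group law $x * y = x + y - xy$. Then for positive integers $j \le s$, the coefficient of $x^j y^s$ in $(\partial G)(x, y)$ is $\sum_{i=0}^{j} (-1)^{j-i} \binom{s+i}{s} \binom{s}{j-i} a_{s+i}$. -/

import Mathlib

variable {K : Type*} [CommRing K]

/-- Substitution of a multivariate power series with vanishing constant term into a
one-variable power series. -/
noncomputable def psubst {σ : Type*} (f : MvPowerSeries σ K) (G : PowerSeries K) :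
    MvPowerSeries σ K :=
  fun d => ∑ n ∈ Finset.range ((d.sum fun _ e => e) + 1),
    PowerSeries.coeff n G * MvPowerSeries.coeff d (f ^ n)

/-- The partial derivative `∂G(x,y) = G(x+y-xy) - G(x) - G(y) + G(0)` of a one-variable
power series with respect to the multiplicative formal group law. -/
noncomputable def deriv2 (G : PowerSeries K) : MvPowerSeries (Fin 2) K :=
  psubst (MvPowerSeries.X 0 + MvPowerSeries.X 1 - MvPowerSeries.X 0 * MvPowerSeries.X 1) G
    - psubst (MvPowerSeries.X 0) G - psubst (MvPowerSeries.X 1) G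
    + MvPowerSeries.C (PowerSeries.constantCoeff G)

/-! Since `x + y - xy = x + y (1 - x)`, the binomial theorem applied twice shows that the
coefficient of `x^j y^s` in `(x + y - xy)^n` is `(-1)^(j-(n-s)) C(n,s) C(s,j-(n-s))` when
`s ≤ n ≤ s + j`, and `0` otherwise. Since `j, s ≥ 1`, the terms `G(x)`, `G(y)` and `G(0)`
of `∂G` do not contribute to `x^j y^s`, so only the terms `aₙ (x + y - xy)^n` with
`n = s + i`, `i ≤ j`, remain. -/

open MvPowerSeries Finset
open Finsupp (single)

theorem single_add_single_eq_iff {a b c d : ℕ} :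
    single (0 : Fin 2) a + single 1 b = single 0 c + single 1 d ↔ a = c ∧ b = d := by
  refine ⟨fun h => ⟨?_, ?_⟩, fun h => by rw [h.1, h.2]⟩
  · simpa using DFunLike.congr_fun h 0
  · simpa using DFunLike.congr_fun h 1

theorem single_add_single_ne_single {j s : ℕ} (hj : j ≠ 0) (hs : s ≠ 0) :
    ∀ (i : Fin 2) (n : ℕ), single 0 j + single 1 s ≠ single i n := by
  refine Fin.forall_fin_two.2 ⟨fun n => ?_, fun n => ?_⟩
  · rw [← add_zero (single 0 n), ← Finsupp.single_zero 1, Ne, single_add_single_eq_iff]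
    omega
  · rw [← zero_add (single 1 n), ← Finsupp.single_zero 0, Ne, single_add_single_eq_iff]
    omega

theorem monomial_single_add_single (a b : ℕ) (c : K) :
    monomial (single (0 : Fin 2) a + single 1 b) c = C c * X 0 ^ a * X 1 ^ b := by
  rw [X_pow_eq, X_pow_eq, ← monomial_zero_eq_C_apply, monomial_mul_monomial,
    monomial_mul_monomial]
  simp

theorem X_add_X_sub_X_mul_X_pow (n : ℕ) :
    (X 0 + X 1 - X 0 * X 1 : MvPowerSeries (Fin 2) K) ^ n
      = ∑ k ∈ range (n + 1), ∑ m ∈ range (k + 1),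
          monomial (single 0 (m + (n - k)) + single 1 k)
            ((-1) ^ m * (k.choose m * n.choose k : K)) := by
  rw [show (X 0 + X 1 - X 0 * X 1 : MvPowerSeries (Fin 2) K) = X 1 * (-X 0 + 1) + X 0 by ring,
    add_pow]
  refine sum_congr rfl fun k _ => ?_
  rw [mul_pow, add_pow, mul_sum, sum_mul, sum_mul]
  refine sum_congr rfl fun m _ => ?_
  simp only [monomial_single_add_single, map_mul, map_pow, map_neg, map_one, map_natCast]
  ring

theorem coeff_X_add_X_sub_X_mul_X_pow (j s n : ℕ) :
    coeff (single 0 j + single 1 s) ((X 0 + X 1 - X 0 * X 1 : MvPowerSeries (Fin 2) K) ^ n)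
      = if s ≤ n ∧ n - s ≤ j then
          (-1) ^ (j - (n - s)) * (n.choose s * s.choose (j - (n - s)) : K) else 0 := by
  have hj : ∀ m, j = m + (n - s) ↔ n - s ≤ j ∧ m = j - (n - s) := by omega
  simp only [X_add_X_sub_X_mul_X_pow, map_sum, coeff_monomial, single_add_single_eq_iff]
  simp only [and_comm (a := j = _), ite_and, sum_ite_irrel, sum_const_zero, sum_ite_eq]
  simp only [hj, ite_and, sum_ite_irrel, sum_const_zero, sum_ite_eq', mem_range]
  rcases lt_or_ge (j - (n - s)) (s + 1) with hm | hm
  · simp only [hm, if_true, Nat.lt_succ_iff, mul_comm (s.choose _ : K)]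
  · simp [Nat.choose_eq_zero_of_lt (by omega : s < j - (n - s))]

theorem coeff_psubst {σ : Type*} (d : σ →₀ ℕ) (f : MvPowerSeries σ K) (G : PowerSeries K) :
    coeff d (psubst f G)
      = ∑ n ∈ range ((d.sum fun _ e => e) + 1), PowerSeries.coeff n G * coeff d (f ^ n) :=
  rfl

theorem coeff_psubst_X_of_ne_single {σ : Type*} (d : σ →₀ ℕ) (i : σ) (G : PowerSeries K)
    (hd : ∀ n, d ≠ single i n) : coeff d (psubst (X i) G) = 0 := by
  classical
  rw [coeff_psubst]
  exact sum_eq_zero fun n _ => by rw [coeff_X_pow, if_neg (hd n), mul_zero]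

theorem coeff_deriv2_general (G : PowerSeries K)
    (j s : ℕ) (hj : 1 ≤ j) (hjs : j ≤ s) :
    MvPowerSeries.coeff (Finsupp.single (0 : Fin 2) j + Finsupp.single (1 : Fin 2) s)
        (deriv2 G)
      = ∑ i ∈ Finset.range (j + 1),
          (-1 : K) ^ (j - i) * ((s + i).choose s : K) * (s.choose (j - i) : K)
            * PowerSeries.coeff (s + i) G := by
  have hne := single_add_single_ne_single (by omega : j ≠ 0) (by omega : s ≠ 0)
  have hdeg : ((single (0 : Fin 2) j + single 1 s).sum fun _ e => e) + 1 = s + (j + 1) := by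
    rw [Finsupp.sum_add_index' (fun _ => rfl) (fun _ _ _ => rfl), Finsupp.sum_single_index rfl,
      Finsupp.sum_single_index rfl]
    omega
  rw [deriv2, map_add, map_sub, map_sub, coeff_psubst_X_of_ne_single _ _ _ (hne 0),
    coeff_psubst_X_of_ne_single _ _ _ (hne 1), coeff_C, if_neg (by simpa using hne 0 0),
    coeff_psubst, hdeg, sum_range_add, sum_eq_zero fun n hn => ?_]
  · simp only [zero_add, sub_zero, add_zero]
    refine sum_congr rfl fun i hi => ?_
    rw [coeff_X_add_X_sub_X_mul_X_pow, if_pos (by rw [mem_range] at hi; omega),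
      Nat.add_sub_cancel_left]
    ring
  · rw [coeff_X_add_X_sub_X_mul_X_pow, if_neg (by rw [mem_range] at hn; omega), mul_zero]

/-- For `G(x) = ∑_{i≥1} aᵢ xⁱ` over a `ℚ`-algebra and positive integers `j ≤ s`, the
coefficient of `x^j y^s` in `∂G` is `∑_{i=0}^{j} (-1)^{j-i} C(s+i,s) C(s,j-i) a_{s+i}`. -/
theorem coeff_deriv2 [Algebra ℚ K] (G : PowerSeries K)
    (hG : PowerSeries.constantCoeff G = 0) (j s : ℕ) (hj : 1 ≤ j) (hjs : j ≤ s) :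
    MvPowerSeries.coeff (Finsupp.single (0 : Fin 2) j + Finsupp.single (1 : Fin 2) s)
        (deriv2 G)
      = ∑ i ∈ Finset.range (j + 1),
          (-1 : K) ^ (j - i) * ((s + i).choose s : K) * (s.choose (j - i) : K)
            * PowerSeries.coeff (s + i) G :=
  coeff_deriv2_general G j s hj hjs
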